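/- For every α ∈ [0,1], the vertical half-line P := {(0, t) ∈ ℝ² : t ≥ 0} is α-sliding minimal (with n = 2, d = 1) in the half-plane ℝ²₊ with sliding boundary Γ. -/

import Mathlib

open MeasureTheory Set

noncomputable section

/-- The functional `J_α(E) = H^d(E \ Γ) + α · H^d(E ∩ Γ)`. -/
def slidingJ (n : ℕ) (d α : ℝ) (G E : Set (EuclideanSpace ℝ (Fin n))) : ENNReal :=
  μH[d] (E \ G) + ENNReal.ofReal α * μH[d] (E ∩ G)

/-- `F` is a sliding competitor of `E` in `Ω` with sliding boundary `G`:
`F = φ₁(E)` for a continuous one-parameter family `φ : [0,1] × E → Ω` with `φ₀ = id`,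
`φ₁` Lipschitz, preserving `G`, and whose moving part is confined to a compact set. -/
def IsSlidingCompetitor (n : ℕ) (Ω G E F : Set (EuclideanSpace ℝ (Fin n))) : Prop :=
  ∃ φ : ℝ → EuclideanSpace ℝ (Fin n) → EuclideanSpace ℝ (Fin n),
    ContinuousOn (fun q : ℝ × EuclideanSpace ℝ (Fin n) => φ q.1 q.2) (Icc (0:ℝ) 1 ×ˢ E) ∧
    (∀ x ∈ E, φ 0 x = x) ∧
    (∃ L : NNReal, LipschitzOnWith L (φ 1) E) ∧
    (∀ t ∈ Icc (0:ℝ) 1, ∀ x ∈ E, φ t x ∈ Ω) ∧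
    (∀ t ∈ Icc (0:ℝ) 1, ∀ x ∈ E ∩ G, φ t x ∈ G) ∧
    (∃ K : Set (EuclideanSpace ℝ (Fin n)), IsCompact K ∧
       ∀ t ∈ Icc (0:ℝ) 1, ∀ x ∈ E, (∃ s ∈ Icc (0:ℝ) 1, φ s x ≠ x) → φ t x ∈ K) ∧
    F = φ 1 '' E

/-- `E ⊆ Ω` is `α`-sliding minimal of dimension `d` in `Ω` with sliding boundary `G`:
`J_α(E \ F) ≤ J_α(F \ E)` for every sliding competitor `F` of `E`. -/
def SlidingMinimal (n : ℕ) (d α : ℝ) (Ω G E : Set (EuclideanSpace ℝ (Fin n))) : Prop :=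
  ∀ F : Set (EuclideanSpace ℝ (Fin n)), IsSlidingCompetitor n Ω G E F →
    slidingJ n d α G (E \ F) ≤ slidingJ n d α G (F \ E)

/-- The cone over a set: `cone(A) = {λ a : λ ≥ 0, a ∈ A}`. -/
def coneOver (n : ℕ) (A : Set (EuclideanSpace ℝ (Fin n))) : Set (EuclideanSpace ℝ (Fin n)) :=
  {x | ∃ lam : ℝ, 0 ≤ lam ∧ ∃ a ∈ A, x = lam • a}

/-- The point of `ℝ²` with coordinates `(a, b)`. -/
def e2 (a b : ℝ) : EuclideanSpace ℝ (Fin 2) := (EuclideanSpace.equiv (Fin 2) ℝ).symm ![a, b]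

/-- The sliding boundary `Γ = {y = 0}` of the half-plane. -/
def Gamma2 : Set (EuclideanSpace ℝ (Fin 2)) := {x | x 1 = 0}

/-- The closed upper half-plane `ℝ²₊ = {y ≥ 0}`. -/
def halfPlane : Set (EuclideanSpace ℝ (Fin 2)) := {x | 0 ≤ x 1}

/-- The vertical half-line `P = {(0, t) : t ≥ 0}`. -/
def vertHalfLine : Set (EuclideanSpace ℝ (Fin 2)) := {p | ∃ t : ℝ, 0 ≤ t ∧ p = e2 0 t}

/-- The cone of type (iv): the union of the half-line `{(t,0) : t ≤ 0}` lying on `Γ`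
with the half-line from the origin making angle `θ_α = arccos α` with `Γ`. -/
def Dcone (α : ℝ) : Set (EuclideanSpace ℝ (Fin 2)) :=
  {p | ∃ t : ℝ, t ≤ 0 ∧ p = e2 t 0} ∪
  {p | ∃ t : ℝ, 0 ≤ t ∧ p = t • e2 (Real.cos (Real.arccos α)) (Real.sin (Real.arccos α))}

/-- The cone `V_θ`: two half-lines from the origin, symmetric with respect to the
vertical axis, each making angle `θ` with `Γ`. -/
def Vcone (θ : ℝ) : Set (EuclideanSpace ℝ (Fin 2)) :=
  {p | ∃ t : ℝ, 0 ≤ t ∧ p = t • e2 (Real.cos θ) (Real.sin θ)} ∪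
  {p | ∃ t : ℝ, 0 ≤ t ∧ p = t • e2 (-Real.cos θ) (Real.sin θ)}

/-- The reflection `(x, y) ↦ (−x, y)`. -/
def refl2 (p : EuclideanSpace ℝ (Fin 2)) : EuclideanSpace ℝ (Fin 2) :=
  e2 (-(p 0)) (p 1)

/-
A sliding competitor `F = φ₁(P)` is connected, meets `Γ` at `φ₁(0)`, and contains every point of
`P` outside the compact set where the motion takes place. Hence the height `(x, y) ↦ y` maps `F`
onto a set containing `[0, ∞)`, so each point `(0, t)` of `P \ F` with `t > 0` is the height of a
point of `F` lying neither on `P` nor on `Γ`. The height is 1-Lipschitz and `t ↦ (0, t)` is an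
isometry, whence `H¹(P \ F) ≤ H¹((F \ P) \ Γ)`. Since `(P \ F) ∩ Γ` is at most the origin, the
weight `α` never enters.
-/

namespace IsSlidingCompetitor

variable {n : ℕ} {Ω G E F : Set (EuclideanSpace ℝ (Fin n))}

theorem exists_isCompact_diff_subset (hF : IsSlidingCompetitor n Ω G E F) :
    ∃ K, IsCompact K ∧ E \ K ⊆ F := by
  obtain ⟨φ, -, hφ0, -, -, -, ⟨K, hK, hmove⟩, rfl⟩ := hF
  refine ⟨K, hK, fun x ⟨hxE, hxK⟩ => ⟨x, hxE, ?_⟩⟩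
  by_contra hne
  have hx0 := hmove 0 ⟨le_rfl, zero_le_one⟩ x hxE ⟨1, ⟨zero_le_one, le_rfl⟩, hne⟩
  exact hxK (hφ0 x hxE ▸ hx0)

theorem isConnected (hF : IsSlidingCompetitor n Ω G E F) (hE : IsConnected E) :
    IsConnected F := by
  obtain ⟨φ, -, -, ⟨L, hL⟩, -, -, -, rfl⟩ := hF
  exact hE.image _ hL.continuousOn

theorem inter_nonempty (hF : IsSlidingCompetitor n Ω G E F) (hEG : (E ∩ G).Nonempty) :
    (F ∩ G).Nonempty := by
  obtain ⟨φ, -, -, -, -, hG, -, rfl⟩ := hF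
  obtain ⟨x, hx⟩ := hEG
  exact ⟨φ 1 x, mem_image_of_mem _ hx.1, hG 1 ⟨zero_le_one, le_rfl⟩ x hx⟩

end IsSlidingCompetitor

theorem slidingJ_eq_of_inter_subsingleton {n : ℕ} {d α : ℝ} (hd : 0 < d)
    {G E : Set (EuclideanSpace ℝ (Fin n))} (hEG : (E ∩ G).Subsingleton) :
    slidingJ n d α G E = μH[d] (E \ G) := by
  have := Measure.nullSingletonClass_hausdorff (EuclideanSpace ℝ (Fin n)) hd
  rw [slidingJ, hEG.measure_zero, mul_zero, add_zero]

theorem EuclideanSpace.lipschitzWith_apply {ι : Type*} [Fintype ι] (i : ι) :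
    LipschitzWith 1 (fun x : EuclideanSpace ℝ ι => x i) :=
  LipschitzWith.of_dist_le_mul fun x y => by simpa using PiLp.dist_apply_le x y i

@[simp]
theorem e2_apply_zero (a b : ℝ) : e2 a b 0 = a := rfl

@[simp]
theorem e2_apply_one (a b : ℝ) : e2 a b 1 = b := rfl

theorem isometry_e2_zero : Isometry (e2 0) :=
  Isometry.of_dist_eq fun s t => by
    simp [EuclideanSpace.dist_eq, Fin.sum_univ_two, Real.sqrt_sq_eq_abs, Real.dist_eq]

theorem vertHalfLine_eq_image : vertHalfLine = e2 0 '' Ici 0 := by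
  ext p
  simp [vertHalfLine, eq_comm]

theorem isConnected_vertHalfLine : IsConnected vertHalfLine :=
  vertHalfLine_eq_image ▸ isConnected_Ici.image _ isometry_e2_zero.continuous.continuousOn

theorem vertHalfLine_inter_Gamma2 : vertHalfLine ∩ Gamma2 = {e2 0 0} := by
  ext p
  constructor
  · rintro ⟨⟨t, -, rfl⟩, ht⟩
    simp only [Gamma2, mem_ofPred_eq, e2_apply_one] at ht
    rw [ht, mem_singleton_iff]
  · rintro rfl
    exact ⟨⟨0, le_rfl, rfl⟩, rfl⟩

theorem IsSlidingCompetitor.Ici_subset_image_apply_one {Ω F : Set (EuclideanSpace ℝ (Fin 2))}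
    (hF : IsSlidingCompetitor 2 Ω Gamma2 vertHalfLine F) : Ici 0 ⊆ (fun x => x 1) '' F := by
  obtain ⟨K, hK, hfix⟩ := hF.exists_isCompact_diff_subset
  have hheight := (EuclideanSpace.lipschitzWith_apply (1 : Fin 2)).continuous
  obtain ⟨b, hb⟩ := (hK.image hheight).bddAbove
  obtain ⟨z, hzF, hzΓ⟩ :=
    hF.inter_nonempty (vertHalfLine_inter_Gamma2 ▸ singleton_nonempty _)
  have hconn : IsPreconnected ((fun x => x 1) '' F) :=
    (hF.isConnected isConnected_vertHalfLine).isPreconnected.image _ hheight.continuousOn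
  intro t ht
  set T := max t (b + 1)
  have hT_notMem : e2 0 T ∉ K := fun hTK =>
    (lt_of_lt_of_le (lt_add_one b) (le_max_right t _)).not_ge (hb ⟨_, hTK, rfl⟩)
  have hT : e2 0 T ∈ F := hfix ⟨⟨T, ht.trans (le_max_left _ _), rfl⟩, hT_notMem⟩
  exact hconn.Icc_subset ⟨z, hzF, hzΓ⟩ ⟨_, hT, rfl⟩ ⟨ht, le_max_left _ _⟩

theorem hausdorffMeasure_vertHalfLine_diff_le {F : Set (EuclideanSpace ℝ (Fin 2))}
    (hF : Ici 0 ⊆ (fun x => x 1) '' F) :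
    μH[1] (vertHalfLine \ F) ≤ μH[1] ((F \ vertHalfLine) \ Gamma2) := by
  have := Measure.nullSingletonClass_hausdorff (EuclideanSpace ℝ (Fin 2)) one_pos
  set A := (fun x => x 1) '' ((F \ vertHalfLine) \ Gamma2)
  have hsub : vertHalfLine \ F ⊆ e2 0 '' A ∪ {e2 0 0} := by
    rintro _ ⟨⟨t, ht, rfl⟩, htF⟩
    rcases ht.eq_or_lt with rfl | ht_pos
    · exact Or.inr rfl
    obtain ⟨y, hyF, rfl⟩ := hF ht
    refine Or.inl ⟨y 1, ⟨y, ⟨⟨hyF, ?_⟩, ht_pos.ne'⟩, rfl⟩, rfl⟩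
    rintro ⟨s, -, rfl⟩
    exact htF hyF
  calc μH[1] (vertHalfLine \ F) ≤ μH[1] (e2 0 '' A) + μH[1] {e2 0 0} :=
        (measure_mono hsub).trans (measure_union_le _ _)
    _ = μH[1] A := by
        rw [isometry_e2_zero.hausdorffMeasure_image (Or.inl zero_le_one), measure_singleton,
          add_zero]
    _ ≤ μH[1] ((F \ vertHalfLine) \ Gamma2) := by
        simpa using (EuclideanSpace.lipschitzWith_apply 1).hausdorffMeasure_image_le zero_le_one
          ((F \ vertHalfLine) \ Gamma2)

theorem vertHalfLine_slidingMinimal_general (α : ℝ) :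
    SlidingMinimal 2 1 α halfPlane Gamma2 vertHalfLine := by
  intro F hF
  have hP_subsingleton : ((vertHalfLine \ F) ∩ Gamma2).Subsingleton :=
    (vertHalfLine_inter_Gamma2 ▸ subsingleton_singleton).anti
      (inter_subset_inter_left _ sdiff_subset)
  rw [slidingJ_eq_of_inter_subsingleton one_pos hP_subsingleton]
  calc μH[1] ((vertHalfLine \ F) \ Gamma2)
      ≤ μH[1] (vertHalfLine \ F) := measure_mono sdiff_subset
    _ ≤ μH[1] ((F \ vertHalfLine) \ Gamma2) :=
        hausdorffMeasure_vertHalfLine_diff_le hF.Ici_subset_image_apply_one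
    _ ≤ slidingJ 2 1 α Gamma2 (F \ vertHalfLine) := le_self_add

/-- For every `α ∈ [0,1]`, the vertical half-line `P = {(0,t) : t ≥ 0}` is `α`-sliding
minimal (n = 2, d = 1) in the half-plane `ℝ²₊` with sliding boundary `Γ`. -/
theorem vertHalfLine_slidingMinimal (α : ℝ) (hα : α ∈ Icc (0:ℝ) 1) :
    SlidingMinimal 2 1 α halfPlane Gamma2 vertHalfLine :=
  vertHalfLine_slidingMinimal_general α
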